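/- arXiv:2505.18810 — 2 statements merged into one kernel-verified Lean document; each statement's English description precedes it below -/
import Mathlib

section
/- Let X, X̃ ⊆ ℝⁿ be open, let φ ∈ C¹(X̃,X) be a diffeomorphism, and let D̄φ be a discrete Jacobian for φ such that D̄φ(x̃,x̃') is invertible for all x̃,x̃' ∈ X̃. Then the map D̄(φ^{-1}) : X × X → ℝ^{n×n} defined by D̄(φ^{-1})(x,x') = (D̄φ(φ^{-1}(x),φ^{-1}(x')))^{-1} is a discrete Jacobian for the inverse diffeomorphism φ^{-1} ∈ C¹(X,X̃). -/
open Matrix Set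

noncomputable def jac {n m : ℕ} (f : (Fin n → ℝ) → (Fin m → ℝ)) (x : Fin n → ℝ) :
    Matrix (Fin m) (Fin n) ℝ :=
  Matrix.of fun i j => fderiv ℝ f x (Pi.single j 1) i

def IsDiscreteJacobian {n m : ℕ} (X : Set (Fin n → ℝ)) (F : (Fin n → ℝ) → (Fin m → ℝ))
    (DF : (Fin n → ℝ) → (Fin n → ℝ) → Matrix (Fin m) (Fin n) ℝ) : Prop :=
  ContinuousOn (fun p : (Fin n → ℝ) × (Fin n → ℝ) => DF p.1 p.2) (X ×ˢ X) ∧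
  (∀ x ∈ X, ∀ x' ∈ X, (DF x x').mulVec (x' - x) = F x' - F x) ∧
  (∀ x ∈ X, DF x x = jac F x)

/-!
Write `ψ = φ⁻¹`. Multiplying the secant identity `D̄φ(ψ x, ψ x') (ψ x' - ψ x) = x' - x` by the
inverse matrix gives the secant identity for `ψ`; continuity follows from continuity of matrix
inversion on invertible matrices; and on the diagonal the chain rule applied to `ψ ∘ φ = id`
near `ψ x` gives `Dψ(x) = (Dφ(ψ x))⁻¹`.
-/

theorem ContinuousOn.matrix_inv {α ι R : Type*} [TopologicalSpace α] [Fintype ι] [DecidableEq ι]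
    [NormedCommRing R] [HasSummableGeomSeries R] {A : α → Matrix ι ι R} {s : Set α}
    (hA : ContinuousOn A s) (hdet : ∀ a ∈ s, IsUnit (A a).det) :
    ContinuousOn (fun a => (A a)⁻¹) s := fun a ha =>
  (continuousAt_matrix_inv _
    (NormedRing.inverse_continuousAt (hdet a ha).unit)).comp_continuousWithinAt (hA a ha)

theorem Matrix.inv_mulVec_eq_of_mulVec_eq {ι R : Type*} [Fintype ι] [DecidableEq ι] [CommRing R]
    {A : Matrix ι ι R} {u v : ι → R} (hA : IsUnit A.det) (h : A *ᵥ v = u) : A⁻¹ *ᵥ u = v := by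
  rw [← h, mulVec_mulVec, nonsing_inv_mul _ hA, one_mulVec]

section Jacobian

variable {n m k : ℕ}

theorem jac_eq_toMatrix' (f : (Fin n → ℝ) → (Fin m → ℝ)) (x : Fin n → ℝ) :
    jac f x = LinearMap.toMatrix' (fderiv ℝ f x : (Fin n → ℝ) →ₗ[ℝ] (Fin m → ℝ)) :=
  rfl

theorem jac_comp {f : (Fin m → ℝ) → (Fin k → ℝ)} {g : (Fin n → ℝ) → (Fin m → ℝ)}
    {x : Fin n → ℝ} (hf : DifferentiableAt ℝ f (g x)) (hg : DifferentiableAt ℝ g x) :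
    jac (f ∘ g) x = jac f (g x) * jac g x := by
  rw [jac_eq_toMatrix', fderiv_comp x hf hg, ContinuousLinearMap.toLinearMap_comp,
    LinearMap.toMatrix'_comp, ← jac_eq_toMatrix', ← jac_eq_toMatrix']

theorem jac_congr_of_eventuallyEq {f g : (Fin n → ℝ) → (Fin m → ℝ)} {x : Fin n → ℝ}
    (h : f =ᶠ[nhds x] g) : jac f x = jac g x := by
  rw [jac_eq_toMatrix', jac_eq_toMatrix', h.fderiv_eq]

theorem jac_id (x : Fin n → ℝ) : jac id x = 1 := by
  rw [jac_eq_toMatrix', fderiv_id, ContinuousLinearMap.coe_id, LinearMap.toMatrix'_id]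

theorem jac_mul_jac_eq_one_of_leftInvOn {φ : (Fin n → ℝ) → (Fin m → ℝ)}
    {ψ : (Fin m → ℝ) → (Fin n → ℝ)} {U : Set (Fin n → ℝ)} (hU : IsOpen U) (hψφ : LeftInvOn ψ φ U)
    {y : Fin n → ℝ} (hy : y ∈ U) (hψ : DifferentiableAt ℝ ψ (φ y))
    (hφ : DifferentiableAt ℝ φ y) : jac ψ (φ y) * jac φ y = 1 := by
  rw [← jac_comp hψ hφ, jac_congr_of_eventuallyEq (hψφ.eqOn.eventuallyEq_of_mem (hU.mem_nhds hy)),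
    jac_id]

end Jacobian

theorem inverse_discrete_jacobian_general {n : ℕ}
    (X Xt : Set (Fin n → ℝ)) (hX : IsOpen X) (hXt : IsOpen Xt)
    (φ ψ : (Fin n → ℝ) → (Fin n → ℝ))
    (hφ : ContDiffOn ℝ 1 φ Xt)
    (hψ : ContDiffOn ℝ 1 ψ X) (hψmap : Set.MapsTo ψ X Xt)
    (hψφ : ∀ xt ∈ Xt, ψ (φ xt) = xt) (hφψ : ∀ x ∈ X, φ (ψ x) = x)
    (Dφ : (Fin n → ℝ) → (Fin n → ℝ) → Matrix (Fin n) (Fin n) ℝ)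
    (hDφ : IsDiscreteJacobian Xt φ Dφ)
    (hDφinv : ∀ xt ∈ Xt, ∀ xt' ∈ Xt, IsUnit (Dφ xt xt').det) :
    IsDiscreteJacobian X ψ (fun x x' => (Dφ (ψ x) (ψ x'))⁻¹) := by
  obtain ⟨hcont, hsecant, hdiag⟩ := hDφ
  refine ⟨?_, fun x hx x' hx' => ?_, fun x hx => ?_⟩
  · refine ContinuousOn.matrix_inv
      (hcont.comp (hψ.continuousOn.prodMap hψ.continuousOn) (hψmap.prodMap hψmap)) ?_
    exact fun p hp => hDφinv _ (hψmap hp.1) _ (hψmap hp.2)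
  · have hφsecant := hsecant _ (hψmap hx) _ (hψmap hx')
    rw [hφψ x hx, hφψ x' hx'] at hφsecant
    exact inv_mulVec_eq_of_mulVec_eq (hDφinv _ (hψmap hx) _ (hψmap hx')) hφsecant
  · have hy := hψmap hx
    have hψdiff : DifferentiableAt ℝ ψ (φ (ψ x)) := by
      rw [hφψ x hx]
      exact (hψ.contDiffAt (hX.mem_nhds hx)).differentiableAt one_ne_zero
    have hφdiff := (hφ.contDiffAt (hXt.mem_nhds hy)).differentiableAt one_ne_zero
    have hinv := jac_mul_jac_eq_one_of_leftInvOn hXt hψφ hy hψdiff hφdiff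
    rw [hφψ x hx] at hinv
    show (Dφ (ψ x) (ψ x))⁻¹ = jac ψ x
    rw [hdiag _ hy]
    exact inv_eq_left_inv hinv

/-- the inverse discrete Jacobian of a pointwise invertible discrete
Jacobian of a diffeomorphism `φ` is a discrete Jacobian for the inverse `ψ = φ⁻¹`. -/
theorem inverse_discrete_jacobian {n : ℕ}
    (X Xt : Set (Fin n → ℝ)) (hX : IsOpen X) (hXt : IsOpen Xt)
    (φ ψ : (Fin n → ℝ) → (Fin n → ℝ))
    (hφ : ContDiffOn ℝ 1 φ Xt) (hφmap : Set.MapsTo φ Xt X)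
    (hψ : ContDiffOn ℝ 1 ψ X) (hψmap : Set.MapsTo ψ X Xt)
    (hψφ : ∀ xt ∈ Xt, ψ (φ xt) = xt) (hφψ : ∀ x ∈ X, φ (ψ x) = x)
    (Dφ : (Fin n → ℝ) → (Fin n → ℝ) → Matrix (Fin n) (Fin n) ℝ)
    (hDφ : IsDiscreteJacobian Xt φ Dφ)
    (hDφinv : ∀ xt ∈ Xt, ∀ xt' ∈ Xt, IsUnit (Dφ xt xt').det) :
    IsDiscreteJacobian X ψ (fun x x' => (Dφ (ψ x) (ψ x'))⁻¹) :=
  inverse_discrete_jacobian_general X Xt hX hXt φ ψ hφ hψ hψmap hψφ hφψ Dφ hDφ hDφinv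
end

section
/- Let X ⊆ ℝⁿ be open, H ∈ C¹(X,ℝ), let (E,z) be a gradient pair for H, let J, R : X → ℝ^{n×n} and B : X → ℝ^{n×m} be continuous with J(x) = −J(x)ᵀ and R(x) symmetric positive semi-definite for all x ∈ X. Let x : [0,T] → X be differentiable and u, y : [0,T] → ℝᵐ satisfy E(x(t)) x'(t) = (J(x(t)) − R(x(t))) z(x(t)) + B(x(t)) u(t) and y(t) = B(x(t))ᵀ z(x(t)) for all t ∈ [0,T]. Then for all t ∈ [0,T], d/dt H(x(t)) = −z(x(t))ᵀ R(x(t)) z(x(t)) + y(t)ᵀ u(t), and in particular d/dt H(x(t)) ≤ y(t)ᵀ u(t). -/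
/-!
Along a solution, `d/dt H(x) = ∇H(x)ᵀ x' = zᵀ E x'` because `(E, z)` is a gradient pair; inserting
the dynamics gives `zᵀ (J - R) z + zᵀ B u`. Skew-symmetry of `J` kills `zᵀ J z`, and `zᵀ B u = yᵀ u`
by the output equation; finally `zᵀ R z ≥ 0` since `R` is positive semi-definite.
-/

open Matrix Set

noncomputable def grad {n : ℕ} (f : (Fin n → ℝ) → ℝ) (x : Fin n → ℝ) : Fin n → ℝ :=
  fun i => fderiv ℝ f x (Pi.single i 1)

lemma fderiv_apply_eq_grad_dotProduct {n : ℕ} (f : (Fin n → ℝ) → ℝ) (p v : Fin n → ℝ) :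
    fderiv ℝ f p v = grad f p ⬝ᵥ v := by
  conv_lhs => rw [pi_eq_sum_univ' v, map_sum]
  simp [grad, dotProduct, mul_comm]

lemma DifferentiableAt.hasDerivAt_comp_grad_dotProduct {n : ℕ} {f : (Fin n → ℝ) → ℝ}
    {x : ℝ → Fin n → ℝ} {v : Fin n → ℝ} {t : ℝ} (hf : DifferentiableAt ℝ f (x t))
    (hx : HasDerivAt x v t) :
    HasDerivAt (fun s => f (x s)) (grad f (x t) ⬝ᵥ v) t := by
  rw [← fderiv_apply_eq_grad_dotProduct]
  exact hf.hasFDerivAt.comp_hasDerivAt t hx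

namespace Matrix

variable {ι κ R : Type*} [Fintype ι] [Fintype κ] [CommRing R]

lemma dotProduct_mulVec_self_eq_zero_of_transpose_eq_neg [IsAddTorsionFree R]
    {A : Matrix ι ι R} (hA : Aᵀ = -A) (v : ι → R) : v ⬝ᵥ A *ᵥ v = 0 := by
  refine self_eq_neg.mp ?_
  conv_lhs => rw [dotProduct_mulVec, ← mulVec_transpose, hA, neg_mulVec, neg_dotProduct,
    dotProduct_comm]

lemma transpose_mulVec_dotProduct_of_descriptor_eq [IsAddTorsionFree R]
    {E J D : Matrix ι ι R} {B : Matrix ι κ R} {z v : ι → R} {u : κ → R} (hJ : Jᵀ = -J)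
    (hdyn : E *ᵥ v = (J - D) *ᵥ z + B *ᵥ u) :
    Eᵀ *ᵥ z ⬝ᵥ v = -(z ⬝ᵥ D *ᵥ z) + Bᵀ *ᵥ z ⬝ᵥ u := by
  rw [mulVec_transpose, mulVec_transpose, ← dotProduct_mulVec, ← dotProduct_mulVec, hdyn,
    dotProduct_add, sub_mulVec, dotProduct_sub,
    dotProduct_mulVec_self_eq_zero_of_transpose_eq_neg hJ, zero_sub]

end Matrix

theorem pHDAE_power_balance_general {n m : ℕ}
    (X : Set (Fin n → ℝ)) (hX : IsOpen X)
    (H : (Fin n → ℝ) → ℝ) (hH : ContDiffOn ℝ 1 H X)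
    (E : (Fin n → ℝ) → Matrix (Fin n) (Fin n) ℝ) (z : (Fin n → ℝ) → (Fin n → ℝ))
    (hgradpair : ∀ x ∈ X, (E x)ᵀ.mulVec (z x) = grad H x)
    (J R : (Fin n → ℝ) → Matrix (Fin n) (Fin n) ℝ)
    (B : (Fin n → ℝ) → Matrix (Fin n) (Fin m) ℝ)
    (hJskew : ∀ x ∈ X, (J x)ᵀ = -(J x))
    (hRpsd : ∀ x ∈ X, (R x).PosSemidef)
    (T : ℝ)
    (x : ℝ → (Fin n → ℝ)) (x' : ℝ → (Fin n → ℝ))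
    (u y : ℝ → (Fin m → ℝ))
    (hxX : ∀ t ∈ Set.Icc 0 T, x t ∈ X)
    (hx' : ∀ t ∈ Set.Icc 0 T, HasDerivAt x (x' t) t)
    (hdyn : ∀ t ∈ Set.Icc 0 T,
      (E (x t)).mulVec (x' t)
        = (J (x t) - R (x t)).mulVec (z (x t)) + (B (x t)).mulVec (u t))
    (hout : ∀ t ∈ Set.Icc 0 T, y t = (B (x t))ᵀ.mulVec (z (x t))) :
    ∀ t ∈ Set.Icc 0 T,
      HasDerivAt (fun s => H (x s))
        (-(z (x t) ⬝ᵥ (R (x t)).mulVec (z (x t))) + y t ⬝ᵥ u t) t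
      ∧ -(z (x t) ⬝ᵥ (R (x t)).mulVec (z (x t))) + y t ⬝ᵥ u t ≤ y t ⬝ᵥ u t := by
  intro t ht
  have hmem : x t ∈ X := hxX t ht
  have hdiff : DifferentiableAt ℝ H (x t) :=
    (hH.contDiffAt (hX.mem_nhds hmem)).differentiableAt one_ne_zero
  have hbalance : grad H (x t) ⬝ᵥ x' t = -(z (x t) ⬝ᵥ R (x t) *ᵥ z (x t)) + y t ⬝ᵥ u t := by
    rw [← hgradpair _ hmem, hout t ht]
    exact transpose_mulVec_dotProduct_of_descriptor_eq (hJskew _ hmem) (hdyn t ht)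
  refine ⟨hbalance ▸ hdiff.hasDerivAt_comp_grad_dotProduct (hx' t ht), ?_⟩
  have hdissipation : 0 ≤ z (x t) ⬝ᵥ R (x t) *ᵥ z (x t) :=
    (hRpsd _ hmem).dotProduct_mulVec_nonneg _
  linarith

/-- the power balance equation and dissipation inequality for
time-invariant port-Hamiltonian descriptor systems. -/
theorem pHDAE_power_balance {n m : ℕ}
    (X : Set (Fin n → ℝ)) (hX : IsOpen X)
    (H : (Fin n → ℝ) → ℝ) (hH : ContDiffOn ℝ 1 H X)
    (E : (Fin n → ℝ) → Matrix (Fin n) (Fin n) ℝ) (z : (Fin n → ℝ) → (Fin n → ℝ))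
    (hEcont : ContinuousOn E X) (hzcont : ContinuousOn z X)
    (hgradpair : ∀ x ∈ X, (E x)ᵀ.mulVec (z x) = grad H x)
    (J R : (Fin n → ℝ) → Matrix (Fin n) (Fin n) ℝ)
    (B : (Fin n → ℝ) → Matrix (Fin n) (Fin m) ℝ)
    (hJcont : ContinuousOn J X) (hRcont : ContinuousOn R X) (hBcont : ContinuousOn B X)
    (hJskew : ∀ x ∈ X, (J x)ᵀ = -(J x))
    (hRpsd : ∀ x ∈ X, (R x).PosSemidef)
    (T : ℝ) (hT : 0 < T)
    (x : ℝ → (Fin n → ℝ)) (x' : ℝ → (Fin n → ℝ))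
    (u y : ℝ → (Fin m → ℝ))
    (hxX : ∀ t ∈ Set.Icc 0 T, x t ∈ X)
    (hx' : ∀ t ∈ Set.Icc 0 T, HasDerivAt x (x' t) t)
    (hdyn : ∀ t ∈ Set.Icc 0 T,
      (E (x t)).mulVec (x' t)
        = (J (x t) - R (x t)).mulVec (z (x t)) + (B (x t)).mulVec (u t))
    (hout : ∀ t ∈ Set.Icc 0 T, y t = (B (x t))ᵀ.mulVec (z (x t))) :
    ∀ t ∈ Set.Icc 0 T,
      HasDerivAt (fun s => H (x s))
        (-(z (x t) ⬝ᵥ (R (x t)).mulVec (z (x t))) + y t ⬝ᵥ u t) t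
      ∧ -(z (x t) ⬝ᵥ (R (x t)).mulVec (z (x t))) + y t ⬝ᵥ u t ≤ y t ⬝ᵥ u t :=
  pHDAE_power_balance_general X hX H hH E z hgradpair J R B hJskew hRpsd T x x' u y hxX hx' hdyn
    hout
end
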